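/- If an x-interval [i..j) of a cyclic suffix array is an ℓ-interval for some ℓ > |x|, then there exists a unique string y of length ℓ − |x| such that [i..j) is also the xy-interval. -/

import Mathlib

set_option linter.unusedSectionVars false

namespace SILA

variable {α : Type*} [LinearOrder α]

/-- Lexicographic order on infinite strings. -/
def lexLE (f g : ℕ → α) : Prop :=
  f = g ∨ ∃ k, (∀ m < k, f m = g m) ∧ f k < g k

/-- Length of longest common prefix of two infinite strings, in ℕ∞. -/
noncomputable def lcpInf (f g : ℕ → α) : ℕ∞ :=
  sSup {m : ℕ∞ | ∀ k : ℕ, (k : ℕ∞) < m → f k = g k}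

/-- A (nonempty) cyclic word. -/
structure CyclicWord (α : Type*) where
  word : List α
  ne : word ≠ []

def CyclicWord.len (w : CyclicWord α) : ℕ := w.word.length

lemma CyclicWord.len_pos (w : CyclicWord α) : 0 < w.len :=
  List.length_pos_iff.mpr w.ne

/-- Positions in a multiset (family) of cyclic words. -/
def Pos {s : ℕ} (W : Fin s → CyclicWord α) : Type _ :=
  (i : Fin s) × Fin (W i).len

instance {s : ℕ} (W : Fin s → CyclicWord α) : Fintype (Pos W) := by
  unfold Pos; infer_instance

/-- The infinite cyclic suffix starting at a position. -/
def suffixAt {s : ℕ} (W : Fin s → CyclicWord α) (p : Pos W) : ℕ → α :=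
  fun k => (W p.1).word.get ⟨(p.2.val + k) % (W p.1).len, Nat.mod_lt _ (W p.1).len_pos⟩

/-- `SA` is a cyclic suffix array of `W`: it enumerates all positions in
nondecreasing lexicographic order of their cyclic suffixes. -/
def IsCyclicSA {s n : ℕ} (W : Fin s → CyclicWord α) (SA : Fin n ≃ Pos W) : Prop :=
  ∀ r r' : Fin n, r ≤ r' → lexLE (suffixAt W (SA r)) (suffixAt W (SA r'))

/-- The LCP array of a cyclic suffix array (meaningful on indices 1..n-1). -/
noncomputable def lcpArr {s n : ℕ} (W : Fin s → CyclicWord α) (SA : Fin n ≃ Pos W)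
    (r : ℕ) : ℕ∞ :=
  if h : 0 < r ∧ r < n then
    lcpInf (suffixAt W (SA ⟨r - 1, by omega⟩)) (suffixAt W (SA ⟨r, h.2⟩))
  else 0

/-- The Burrows–Wheeler transform: character cyclically preceding the suffix of rank `r`. -/
def bwt {s n : ℕ} (W : Fin s → CyclicWord α) (SA : Fin n ≃ Pos W) (r : Fin n) : α :=
  (W (SA r).1).word.get ⟨((SA r).2.val + (W (SA r).1).len - 1) % (W (SA r).1).len,
    Nat.mod_lt _ (W (SA r).1).len_pos⟩

/-- `x` is a (finite) prefix of the infinite string `f`. -/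
def IsPrefix (x : List α) (f : ℕ → α) : Prop :=
  ∀ m : Fin x.length, f m.val = x.get m

/-- `[i..j)` is the x-interval: the ranks of exactly those suffixes with prefix `x`. -/
def IsXInterval {s n : ℕ} (W : Fin s → CyclicWord α) (SA : Fin n ≃ Pos W)
    (x : List α) (i j : ℕ) : Prop :=
  i ≤ j ∧ j ≤ n ∧ ∀ r : Fin n, IsPrefix x (suffixAt W (SA r)) ↔ (i ≤ r.val ∧ r.val < j)

/-- `[i..j)` is an ℓ-interval of the LCP array `L` (of length `n`, indices 1..n-1). -/
def IsLInterval (L : ℕ → ℕ∞) (n : ℕ) (ℓ : ℕ∞) (i j : ℕ) : Prop :=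
  i < j ∧ j ≤ n ∧
  (i = 0 ∨ L i < ℓ) ∧
  (∀ r, i < r → r < j → ℓ ≤ L r) ∧
  ((i + 1 = j ∧ ℓ = ⊤) ∨ ∃ r, i < r ∧ r < j ∧ L r = ℓ) ∧
  (j = n ∨ L j < ℓ)

/-! Inside an ℓ-interval every LCP value is at least ℓ, so the suffixes of ranks `i, …, j-1`
share their first ℓ characters. Let `y` be the characters `|x|, …, ℓ-1` of the suffix of rank
`i`: a suffix of rank in `[i..j)` has prefix `x` by assumption, and its next characters agree
with those of rank `i`, so it has prefix `xy`; conversely a suffix with prefix `xy` has prefix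
`x`. Any other such `y` is also a prefix of the suffix of rank `i` after `x`, hence equal. -/

lemma le_lcpInf_iff (f g : ℕ → α) (ℓ : ℕ) :
    (ℓ : ℕ∞) ≤ lcpInf f g ↔ ∀ k < ℓ, f k = g k := by
  constructor
  · intro h k hk
    obtain ⟨m, hm, hkm⟩ := lt_sSup_iff.mp ((ENat.natCast_lt_natCast.mpr hk).trans_le h)
    exact hm k hkm
  · intro h
    exact le_sSup fun k hk => h k (ENat.natCast_lt_natCast.mp hk)

lemma isPrefix_append_iff {x y : List α} {f : ℕ → α} :
    IsPrefix (x ++ y) f ↔ IsPrefix x f ∧ ∀ m : Fin y.length, f (x.length + m) = y.get m := by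
  constructor
  · intro h
    refine ⟨fun m => ?_, fun m => ?_⟩
    · simpa [List.getElem_append_left m.isLt] using h ⟨m, by simp; omega⟩
    · simpa using h ⟨x.length + m, by simp⟩
  · rintro ⟨hx, hy⟩ ⟨m, hm⟩
    rcases lt_or_ge m x.length with hmx | hmx
    · simpa [List.getElem_append_left hmx] using hx ⟨m, hmx⟩
    · obtain ⟨k, rfl⟩ := Nat.exists_eq_add_of_le hmx
      simpa using hy ⟨k, by simp at hm; omega⟩

lemma IsPrefix.append_ofFn {x : List α} {f : ℕ → α} (hx : IsPrefix x f) (k : ℕ) :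
    IsPrefix (x ++ List.ofFn fun m : Fin k => f (x.length + m)) f :=
  isPrefix_append_iff.mpr ⟨hx, fun m => by simp⟩

lemma IsPrefix.eq_of_length_eq {x y : List α} {f : ℕ → α} (hx : IsPrefix x f)
    (hy : IsPrefix y f) (h : x.length = y.length) : x = y :=
  List.ext_get h fun m h₁ h₂ => (hx ⟨m, h₁⟩).symm.trans (hy ⟨m, h₂⟩)

section LCP

variable {s n : ℕ} {W : Fin s → CyclicWord α} {SA : Fin n ≃ Pos W}

lemma suffixAt_eq_of_le_lcpArr {r ℓ k : ℕ} (hr : r + 1 < n)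
    (h : (ℓ : ℕ∞) ≤ lcpArr W SA (r + 1)) (hk : k < ℓ) :
    suffixAt W (SA ⟨r, by omega⟩) k = suffixAt W (SA ⟨r + 1, hr⟩) k := by
  rw [lcpArr, dif_pos ⟨r.succ_pos, hr⟩, le_lcpInf_iff] at h
  exact h k hk

lemma suffixAt_eq_of_forall_le_lcpArr {i j ℓ k : ℕ}
    (hmin : ∀ r, i < r → r < j → (ℓ : ℕ∞) ≤ lcpArr W SA r) {a b : Fin n}
    (hia : i ≤ a) (hab : a ≤ b) (hbj : b < j) (hk : k < ℓ) :
    suffixAt W (SA a) k = suffixAt W (SA b) k := by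
  obtain ⟨b, hb⟩ := b
  change a.val ≤ b at hab
  change b < j at hbj
  revert hb hbj
  induction b, hab using Nat.le_induction with
  | base => intro _ _; rfl
  | succ m ham ih =>
    intro hb hbj
    rw [ih (by omega) (by omega)]
    exact suffixAt_eq_of_le_lcpArr hb (hmin _ (by omega) hbj) hk

lemma IsXInterval.append {x y : List α} {i j ℓ : ℕ} (hx : IsXInterval W SA x i j)
    (hmin : ∀ r, i < r → r < j → (ℓ : ℕ∞) ≤ lcpArr W SA r) {a : Fin n} (ha : a.val = i)
    (hyℓ : y.length ≤ ℓ - x.length) (hy : IsPrefix (x ++ y) (suffixAt W (SA a))) :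
    IsXInterval W SA (x ++ y) i j := by
  obtain ⟨hij, hjn, hxiff⟩ := hx
  refine ⟨hij, hjn, fun r => ⟨fun hr => (hxiff r).mp (isPrefix_append_iff.mp hr).1, ?_⟩⟩
  rintro ⟨hir, hrj⟩
  refine isPrefix_append_iff.mpr ⟨(hxiff r).mpr ⟨hir, hrj⟩, fun m => ?_⟩
  rw [← (isPrefix_append_iff.mp hy).2 m]
  exact (suffixAt_eq_of_forall_le_lcpArr hmin ha.ge (Fin.le_def.mpr (ha ▸ hir)) hrj
    (by omega)).symm

end LCP

theorem xInterval_extension_unique {α : Type*} [LinearOrder α] {s n : ℕ}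
    (W : Fin s → CyclicWord α) (SA : Fin n ≃ Pos W)
    (x : List α) (i j : ℕ) (ℓ : ℕ)
    (hx : IsXInterval W SA x i j)
    (hℓ : IsLInterval (lcpArr W SA) n (ℓ : ℕ∞) i j) :
    ∃! y : List α, y.length = ℓ - x.length ∧ IsXInterval W SA (x ++ y) i j := by
  obtain ⟨hij, hjn, -, hmin, -⟩ := hℓ
  set a : Fin n := ⟨i, hij.trans_le hjn⟩
  have hxa : IsPrefix x (suffixAt W (SA a)) := (hx.2.2 a).mpr ⟨le_rfl, hij⟩
  set y := List.ofFn fun m : Fin (ℓ - x.length) => suffixAt W (SA a) (x.length + m)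
  have hya : IsPrefix (x ++ y) (suffixAt W (SA a)) := hxa.append_ofFn _
  refine ⟨y, ⟨List.length_ofFn, hx.append hmin rfl List.length_ofFn.le hya⟩, ?_⟩
  rintro y' ⟨hy'len, hy'⟩
  have hy'a := (hy'.2.2 a).mpr ⟨le_rfl, hij⟩
  exact List.append_cancel_left (hy'a.eq_of_length_eq hya (by simp [y, hy'len]))

end SILA
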